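/- arXiv:2206.03568 — 9 statements merged into one kernel-verified Lean document; each statement's English description precedes it below -/
import Mathlib

section
/- Let f : ℝⁿ → ℝⁿ and g : ℝⁿ → ℝⁿˣᵐ be continuous, h : ℝⁿ → ℝ be continuously differentiable, α be a locally Lipschitz extended class K∞ function, and k : ℝⁿ → ℝᵐ be a continuous controller satisfying L_f h(x) + L_g h(x) k(x) ≥ −α(h(x)) for all x ∈ ℝⁿ. Let x : [0,∞) → ℝⁿ be differentiable with ẋ(t) = f(x(t)) + g(x(t)) k(x(t)) for all t ≥ 0. If h(x(0)) ≥ 0, then h(x(t)) ≥ 0 for all t ≥ 0; that is, the 0-superlevel set C = {x : h(x) ≥ 0} is forward invariant for the closed-loop system. -/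
open RealInnerProductSpace

/-- An extended class K∞ function: continuous, strictly increasing, zero at zero,
tending to `∞` at `∞` and to `-∞` at `-∞`. -/
structure ClassKInfE (α : ℝ → ℝ) : Prop where
  continuous : Continuous α
  strictMono : StrictMono α
  map_zero : α 0 = 0
  tendsto_atTop : Filter.Tendsto α Filter.atTop Filter.atTop
  tendsto_atBot : Filter.Tendsto α Filter.atBot Filter.atBot

/-- Lie derivative of `h` along the vector field `f`: `L_f h(x) = (∂h/∂x)(x) f(x)`. -/
noncomputable def LieF {n : ℕ} (h : EuclideanSpace ℝ (Fin n) → ℝ)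
    (f : EuclideanSpace ℝ (Fin n) → EuclideanSpace ℝ (Fin n))
    (x : EuclideanSpace ℝ (Fin n)) : ℝ :=
  fderiv ℝ h x (f x)

/-- Lie derivative of `h` along the input matrix `g`:
`L_g h(x) = (∂h/∂x)(x) g(x) ∈ ℝ^{1×m}`, viewed as a linear functional on `ℝᵐ`. -/
noncomputable def LieG {n m : ℕ} (h : EuclideanSpace ℝ (Fin n) → ℝ)
    (g : EuclideanSpace ℝ (Fin n) → (EuclideanSpace ℝ (Fin m) →L[ℝ] EuclideanSpace ℝ (Fin n)))
    (x : EuclideanSpace ℝ (Fin n)) : EuclideanSpace ℝ (Fin m) →L[ℝ] ℝ :=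
  (fderiv ℝ h x).comp (g x)

open Set

/-- A barrier argument: `y` cannot cross below `0`, because on any stretch where it is negative
it is nondecreasing, so it stays above its value at the last time it was nonnegative. -/
theorem nonneg_of_hasDerivAt_of_deriv_nonneg_of_neg {y y' : ℝ → ℝ} {a : ℝ}
    (hy : ∀ t ≥ a, HasDerivAt y (y' t) t) (hy' : ∀ t ≥ a, y t < 0 → 0 ≤ y' t)
    (ha : 0 ≤ y a) : ∀ t ≥ a, 0 ≤ y t := by
  intro b hab
  by_contra! hyb
  have hcont : ContinuousOn y (Icc a b) := fun t ht =>
    (hy t ht.1).continuousAt.continuousWithinAt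
  obtain ⟨c, ⟨hc, hyc⟩, hc_max⟩ : ∃ c, IsGreatest (Icc a b ∩ y ⁻¹' Ici 0) c :=
    (isCompact_Icc.of_isClosed_subset (hcont.preimage_isClosed_of_isClosed isClosed_Icc
      isClosed_Ici) inter_subset_left).exists_isGreatest ⟨a, ⟨le_rfl, hab⟩, ha⟩
  have hneg : ∀ t ∈ Ioc c b, y t < 0 := fun t ht => by
    by_contra! hyt
    exact (hc_max ⟨⟨hc.1.trans ht.1.le, ht.2⟩, hyt⟩).not_gt ht.1
  have hmono : MonotoneOn y (Icc c b) := by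
    refine monotoneOn_of_hasDerivWithinAt_nonneg (f' := y') (convex_Icc c b)
      (hcont.mono (Icc_subset_Icc_left hc.1)) (fun t ht => ?_) (fun t ht => ?_)
    all_goals rw [interior_Icc] at ht
    · exact (hy t (hc.1.trans ht.1.le)).hasDerivWithinAt
    · exact hy' t (hc.1.trans ht.1.le) (hneg t ⟨ht.1, ht.2.le⟩)
  exact hyb.not_ge (hyc.trans (hmono (left_mem_Icc.2 hc.2) (right_mem_Icc.2 hc.2) hc.2))

theorem hasDerivAt_comp_closedLoop {n m : ℕ}
    {f : EuclideanSpace ℝ (Fin n) → EuclideanSpace ℝ (Fin n)}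
    {g : EuclideanSpace ℝ (Fin n) → (EuclideanSpace ℝ (Fin m) →L[ℝ] EuclideanSpace ℝ (Fin n))}
    {h : EuclideanSpace ℝ (Fin n) → ℝ} {k : EuclideanSpace ℝ (Fin n) → EuclideanSpace ℝ (Fin m)}
    {x : ℝ → EuclideanSpace ℝ (Fin n)} {t : ℝ} (hh : DifferentiableAt ℝ h (x t))
    (hx : HasDerivAt x (f (x t) + g (x t) (k (x t))) t) :
    HasDerivAt (h ∘ x) (LieF h f (x t) + LieG h g (x t) (k (x t))) t := by
  simpa only [LieF, LieG, ContinuousLinearMap.comp_apply, map_add] using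
    hh.hasFDerivAt.comp_hasDerivAt t hx

theorem ClassKInfE.neg_of_neg {α : ℝ → ℝ} (hα : ClassKInfE α) {r : ℝ} (hr : r < 0) :
    α r < 0 :=
  hα.map_zero ▸ hα.strictMono hr

theorem cbf_forward_invariance_general {n m : ℕ}
    (f : EuclideanSpace ℝ (Fin n) → EuclideanSpace ℝ (Fin n))
    (g : EuclideanSpace ℝ (Fin n) → (EuclideanSpace ℝ (Fin m) →L[ℝ] EuclideanSpace ℝ (Fin n)))
    (h : EuclideanSpace ℝ (Fin n) → ℝ) (α : ℝ → ℝ)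
    (hh : ContDiff ℝ 1 h)
    (hα : ClassKInfE α)
    (k : EuclideanSpace ℝ (Fin n) → EuclideanSpace ℝ (Fin m))
    (hsafe : ∀ x : EuclideanSpace ℝ (Fin n),
      LieF h f x + LieG h g x (k x) ≥ -α (h x))
    (x : ℝ → EuclideanSpace ℝ (Fin n))
    (hode : ∀ t : ℝ, t ≥ 0 → HasDerivAt x (f (x t) + g (x t) (k (x t))) t)
    (h0 : h (x 0) ≥ 0) :
    ∀ t : ℝ, t ≥ 0 → h (x t) ≥ 0 := by
  refine nonneg_of_hasDerivAt_of_deriv_nonneg_of_neg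
    (fun t ht => hasDerivAt_comp_closedLoop ((hh.differentiable one_ne_zero) (x t)) (hode t ht))
    (fun t _ hyt => ?_) h0
  linarith [hsafe (x t), hα.neg_of_neg hyt]

/-- if a continuous controller `k` satisfies the CBF inequality pointwise,
then the 0-superlevel set of `h` is forward invariant for the closed-loop system. -/
theorem cbf_forward_invariance {n m : ℕ}
    (f : EuclideanSpace ℝ (Fin n) → EuclideanSpace ℝ (Fin n))
    (g : EuclideanSpace ℝ (Fin n) → (EuclideanSpace ℝ (Fin m) →L[ℝ] EuclideanSpace ℝ (Fin n)))
    (h : EuclideanSpace ℝ (Fin n) → ℝ) (α : ℝ → ℝ)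
    (hf : Continuous f) (hg : Continuous g) (hh : ContDiff ℝ 1 h)
    (hα : ClassKInfE α) (hαlip : LocallyLipschitz α)
    (k : EuclideanSpace ℝ (Fin n) → EuclideanSpace ℝ (Fin m)) (hk : Continuous k)
    (hsafe : ∀ x : EuclideanSpace ℝ (Fin n),
      LieF h f x + LieG h g x (k x) ≥ -α (h x))
    (x : ℝ → EuclideanSpace ℝ (Fin n))
    (hode : ∀ t : ℝ, t ≥ 0 → HasDerivAt x (f (x t) + g (x t) (k (x t))) t)
    (h0 : h (x 0) ≥ 0) :
    ∀ t : ℝ, t ≥ 0 → h (x t) ≥ 0 :=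
  cbf_forward_invariance_general f g h α hh hα k hsafe x hode h0
end

section
/- Let α : ℝ → ℝ be a locally Lipschitz extended class K∞ function and let y : [0,∞) → ℝ be differentiable with y'(t) ≥ −α(y(t)) for all t ≥ 0. If y(0) ≥ 0, then y(t) ≥ 0 for all t ≥ 0. -/
open RealInnerProductSpace

theorem ClassKInfE.map_neg_iff {α : ℝ → ℝ} (hα : ClassKInfE α) {x : ℝ} :
    α x < 0 ↔ x < 0 := by
  simpa only [hα.map_zero] using hα.strictMono.lt_iff_lt (b := 0)

/-- Each level `-ε < 0` is a barrier that `y` cannot cross downwards, since `y` increases there;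
letting `ε → 0` gives `0 ≤ y`. -/
theorem nonneg_of_pos_deriv_of_neg {y y' : ℝ → ℝ} {a b : ℝ}
    (hcont : ContinuousOn y (Set.Icc a b))
    (hy : ∀ x ∈ Set.Ico a b, HasDerivWithinAt y (y' x) (Set.Ici x) x)
    (hpos : ∀ x ∈ Set.Ico a b, y x < 0 → 0 < y' x) (ha : 0 ≤ y a) :
    ∀ x ∈ Set.Icc a b, 0 ≤ y x := by
  intro x hx
  have below_level : ∀ ε > 0, -y x ≤ ε := fun ε hε =>
    image_le_of_deriv_right_lt_deriv_boundary (B := fun _ => ε) (B' := fun _ => 0) hcont.neg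
      (fun x hx => (hy x hx).neg) ((neg_nonpos.mpr ha).trans hε.le) (fun _ => hasDerivAt_const _ _)
      (fun x hx hyx => by
        simp only [Pi.neg_apply] at hyx ⊢
        linarith [hpos x hx (by linarith)]) hx
  exact neg_nonpos.mp <|
    le_of_forall_pos_le_add fun ε hε => (zero_add ε).symm ▸ below_level ε hε

theorem comparison_nonneg_general (α : ℝ → ℝ) (hα : ClassKInfE α)
    (y y' : ℝ → ℝ)
    (hy : ∀ t : ℝ, t ≥ 0 → HasDerivAt y (y' t) t)
    (hineq : ∀ t : ℝ, t ≥ 0 → y' t ≥ -α (y t))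
    (h0 : y 0 ≥ 0) :
    ∀ t : ℝ, t ≥ 0 → y t ≥ 0 := by
  intro t ht
  refine nonneg_of_pos_deriv_of_neg (b := t)
    (fun x hx => (hy x hx.1).continuousAt.continuousWithinAt)
    (fun x hx => (hy x hx.1).hasDerivWithinAt) (fun x hx hyx => ?_) h0 t ⟨ht, le_rfl⟩
  linarith [hineq x hx.1, hα.map_neg_iff.mpr hyx]

/-- scalar comparison lemma: if `y'(t) ≥ -α(y(t))` and `y(0) ≥ 0`,
then `y(t) ≥ 0` for all `t ≥ 0`. -/
theorem comparison_nonneg (α : ℝ → ℝ) (hα : ClassKInfE α) (hαlip : LocallyLipschitz α)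
    (y y' : ℝ → ℝ)
    (hy : ∀ t : ℝ, t ≥ 0 → HasDerivAt y (y' t) t)
    (hineq : ∀ t : ℝ, t ≥ 0 → y' t ≥ -α (y t))
    (h0 : y 0 ≥ 0) :
    ∀ t : ℝ, t ≥ 0 → y t ≥ 0 :=
  comparison_nonneg_general α hα y y' hy hineq h0
end

section
/- Let f : ℝⁿ → ℝⁿ and g : ℝⁿ → ℝⁿˣᵐ be continuous, h : ℝⁿ → ℝ be continuously differentiable, α be an extended class K∞ function, and k_n : ℝⁿ → ℝᵐ be continuous. Suppose the CBF condition holds: for all x, L_g h(x) = 0 implies L_f h(x) + α(h(x)) > 0. Define η(x) = −(L_f h(x) + L_g h(x) k_n(x) + α(h(x)))/‖L_g h(x)‖₂² if L_g h(x) ≠ 0 and η(x) = 0 if L_g h(x) = 0, and define k_QP(x) = k_n(x) + max{0, η(x)} L_g h(x)ᵀ. Then for every x ∈ ℝⁿ, L_f h(x) + L_g h(x) k_QP(x) ≥ −α(h(x)); i.e., k_QP(x) ∈ K_CBF(x). -/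
open RealInnerProductSpace Classical

/-!
Write `ℓ = L_g h(x)`, `u = k_n(x)` and `c = L_f h(x) + ℓ u + α(h(x))` for the slack of the
constraint at `u`. The correction adds `max 0 (-c / ‖ℓ‖²) ℓᵀ` and `ℓ ℓᵀ = ‖ℓ‖²`, so for `ℓ ≠ 0`
the slack becomes `c + max 0 (-c) = max c 0 ≥ 0`; for `ℓ = 0` the slack is `L_f h(x) + α(h(x))`,
positive by the CBF condition.
-/

open InnerProductSpace

section QPFilter

variable {E : Type*} [NormedAddCommGroup E] [InnerProductSpace ℝ E] [CompleteSpace E]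

theorem InnerProductSpace.apply_toDual_symm_self (ℓ : StrongDual ℝ E) :
    ℓ ((toDual ℝ E).symm ℓ) = ‖ℓ‖ ^ 2 := by
  rw [← toDual_symm_apply, real_inner_self_eq_norm_sq, LinearIsometryEquiv.norm_map]

/-- The closed-form minimiser of `‖v - u‖²` subject to `a + ℓ v ≥ -b`, when that is feasible. -/
noncomputable def qpFilter (ℓ : StrongDual ℝ E) (a b : ℝ) (u : E) : E :=
  u + max 0 (if ℓ = 0 then 0 else -(a + ℓ u + b) / ‖ℓ‖ ^ 2) • (toDual ℝ E).symm ℓ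

theorem add_apply_qpFilter_ge_neg (ℓ : StrongDual ℝ E) (a b : ℝ) (u : E)
    (hℓ : ℓ = 0 → a + b > 0) : a + ℓ (qpFilter ℓ a b u) ≥ -b := by
  rw [qpFilter, map_add, map_smul, smul_eq_mul, apply_toDual_symm_self]
  split_ifs with hzero
  · subst hzero
    simp only [zero_apply, norm_zero]
    linarith [hℓ rfl]
  · have hN : 0 < ‖ℓ‖ ^ 2 := by positivity
    rw [max_mul_of_nonneg _ _ hN.le, zero_mul, div_mul_cancel₀ _ hN.ne']
    linarith [le_max_right 0 (-(a + ℓ u + b))]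

end QPFilter

theorem kQP_satisfies_cbf_constraint_general {n m : ℕ}
    (f : EuclideanSpace ℝ (Fin n) → EuclideanSpace ℝ (Fin n))
    (g : EuclideanSpace ℝ (Fin n) → (EuclideanSpace ℝ (Fin m) →L[ℝ] EuclideanSpace ℝ (Fin n)))
    (h : EuclideanSpace ℝ (Fin n) → ℝ) (α : ℝ → ℝ)
    (kn : EuclideanSpace ℝ (Fin n) → EuclideanSpace ℝ (Fin m))
    (hcbf : ∀ x : EuclideanSpace ℝ (Fin n), LieG h g x = 0 → LieF h f x + α (h x) > 0)
    (η : EuclideanSpace ℝ (Fin n) → ℝ)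
    (hη : ∀ x, η x = if LieG h g x = 0 then 0
      else -(LieF h f x + LieG h g x (kn x) + α (h x)) / ‖LieG h g x‖ ^ 2)
    (kQP : EuclideanSpace ℝ (Fin n) → EuclideanSpace ℝ (Fin m))
    (hkQP : ∀ x, kQP x = kn x + max 0 (η x) •
      (InnerProductSpace.toDual ℝ (EuclideanSpace ℝ (Fin m))).symm (LieG h g x)) :
    ∀ x : EuclideanSpace ℝ (Fin n), LieF h f x + LieG h g x (kQP x) ≥ -α (h x) := by
  intro x
  have hfilter : kQP x = qpFilter (LieG h g x) (LieF h f x) (α (h x)) (kn x) := by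
    rw [hkQP x, hη x, qpFilter]
  rw [hfilter]
  exact add_apply_qpFilter_ge_neg _ _ _ _ (hcbf x)

/-- the explicit QP controller `k_QP` satisfies the CBF constraint
`L_f h(x) + L_g h(x) k_QP(x) ≥ -α(h(x))` at every point. -/
theorem kQP_satisfies_cbf_constraint {n m : ℕ}
    (f : EuclideanSpace ℝ (Fin n) → EuclideanSpace ℝ (Fin n))
    (g : EuclideanSpace ℝ (Fin n) → (EuclideanSpace ℝ (Fin m) →L[ℝ] EuclideanSpace ℝ (Fin n)))
    (h : EuclideanSpace ℝ (Fin n) → ℝ) (α : ℝ → ℝ)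
    (hf : Continuous f) (hg : Continuous g) (hh : ContDiff ℝ 1 h) (hα : ClassKInfE α)
    (kn : EuclideanSpace ℝ (Fin n) → EuclideanSpace ℝ (Fin m)) (hkn : Continuous kn)
    (hcbf : ∀ x : EuclideanSpace ℝ (Fin n), LieG h g x = 0 → LieF h f x + α (h x) > 0)
    (η : EuclideanSpace ℝ (Fin n) → ℝ)
    (hη : ∀ x, η x = if LieG h g x = 0 then 0
      else -(LieF h f x + LieG h g x (kn x) + α (h x)) / ‖LieG h g x‖ ^ 2)
    (kQP : EuclideanSpace ℝ (Fin n) → EuclideanSpace ℝ (Fin m))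
    (hkQP : ∀ x, kQP x = kn x + max 0 (η x) •
      (InnerProductSpace.toDual ℝ (EuclideanSpace ℝ (Fin m))).symm (LieG h g x)) :
    ∀ x : EuclideanSpace ℝ (Fin n), LieF h f x + LieG h g x (kQP x) ≥ -α (h x) :=
  kQP_satisfies_cbf_constraint_general f g h α kn hcbf η hη kQP hkQP
end

section
/- Let a : ℝⁿ → ℝᵐ and ψ : ℝⁿ → ℝ be continuous and suppose that a(x) = 0 implies ψ(x) > 0 for every x ∈ ℝⁿ. Let k_n : ℝⁿ → ℝᵐ be continuous. Define η(x) = −ψ(x)/‖a(x)‖₂² if a(x) ≠ 0 and η(x) = 0 if a(x) = 0, and k_QP(x) = k_n(x) + max{0, η(x)} a(x). Then k_QP : ℝⁿ → ℝᵐ is continuous. -/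
open RealInnerProductSpace

/-! Off the zero set of `a` the gain `η = -ψ / ‖a‖²` is continuous. At a zero `x₀` of `a` we have
`ψ > 0` on a neighbourhood of `x₀`, where `η ≤ 0`, so the correction term `max 0 η • a` vanishes
identically there and is trivially continuous at `x₀`. -/

section QPCorrection

variable {X E : Type*} [NormedAddCommGroup E] [DecidableEq E]

noncomputable def qpGain (a : X → E) (ψ : X → ℝ) (x : X) : ℝ :=
  if a x = 0 then 0 else -ψ x / ‖a x‖ ^ 2

lemma qpGain_nonpos_of_pos {a : X → E} {ψ : X → ℝ} {x : X} (hψx : 0 < ψ x) :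
    qpGain a ψ x ≤ 0 := by
  unfold qpGain
  split_ifs
  · rfl
  · exact div_nonpos_of_nonpos_of_nonneg (by linarith) (by positivity)

lemma continuousAt_qpGain_of_ne_zero [TopologicalSpace X] {a : X → E} {ψ : X → ℝ} {x₀ : X}
    (ha : Continuous a) (hψ : Continuous ψ) (h₀ : a x₀ ≠ 0) :
    ContinuousAt (qpGain a ψ) x₀ := by
  have hgain : (fun x => -ψ x / ‖a x‖ ^ 2) =ᶠ[nhds x₀] qpGain a ψ := by
    filter_upwards [ha.continuousAt.eventually_ne h₀] with x hx
    rw [qpGain, if_neg hx]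
  refine ContinuousAt.congr ?_ hgain
  exact hψ.continuousAt.neg.div (ha.norm.pow 2).continuousAt (by positivity)

lemma continuousAt_qpCorrection_of_pos [TopologicalSpace X] [NormedSpace ℝ E]
    {a : X → E} {ψ : X → ℝ} {x₀ : X} (hψ : Continuous ψ) (hψx₀ : 0 < ψ x₀) :
    ContinuousAt (fun x => max 0 (qpGain a ψ x) • a x) x₀ := by
  have hzero : (fun _ => (0 : E)) =ᶠ[nhds x₀] fun x => max 0 (qpGain a ψ x) • a x := by
    filter_upwards [continuousAt_const.eventually_lt hψ.continuousAt hψx₀] with x hx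
    rw [max_eq_left (qpGain_nonpos_of_pos hx), zero_smul]
  exact continuousAt_const.congr hzero

lemma continuous_qpCorrection [TopologicalSpace X] [NormedSpace ℝ E] {a : X → E} {ψ : X → ℝ}
    (ha : Continuous a) (hψ : Continuous ψ) (hpos : ∀ x, a x = 0 → 0 < ψ x) :
    Continuous fun x => max 0 (qpGain a ψ x) • a x := by
  refine continuous_iff_continuousAt.mpr fun x₀ => ?_
  by_cases h₀ : a x₀ = 0
  · exact continuousAt_qpCorrection_of_pos hψ (hpos x₀ h₀)
  · exact (continuousAt_const.max (continuousAt_qpGain_of_ne_zero ha hψ h₀)).smul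
      ha.continuousAt

end QPCorrection

open Classical

/-- continuity of the QP-type controller
`k_QP(x) = k_n(x) + max{0, η(x)} a(x)` with `η(x) = -ψ(x)/‖a(x)‖²` off `{a = 0}`. -/
theorem kQP_continuous {n m : ℕ}
    (a : EuclideanSpace ℝ (Fin n) → EuclideanSpace ℝ (Fin m))
    (ψ : EuclideanSpace ℝ (Fin n) → ℝ)
    (kn : EuclideanSpace ℝ (Fin n) → EuclideanSpace ℝ (Fin m))
    (hacont : Continuous a) (hψ : Continuous ψ) (hkn : Continuous kn)
    (hpos : ∀ x, a x = 0 → ψ x > 0)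
    (η : EuclideanSpace ℝ (Fin n) → ℝ)
    (hη : ∀ x, η x = if a x = 0 then 0 else -ψ x / ‖a x‖ ^ 2)
    (kQP : EuclideanSpace ℝ (Fin n) → EuclideanSpace ℝ (Fin m))
    (hkQP : ∀ x, kQP x = kn x + max 0 (η x) • a x) :
    Continuous kQP := by
  obtain rfl : η = qpGain a ψ := funext hη
  obtain rfl : kQP = fun x => kn x + max 0 (qpGain a ψ x) • a x := funext hkQP
  exact hkn.add (continuous_qpCorrection hacont hψ hpos)
end

section
/- Let f : ℝⁿ → ℝⁿ and g : ℝⁿ → ℝⁿ (single input, m = 1) be continuous, h : ℝⁿ → ℝ be continuously differentiable, α be an extended class K∞ function, and k_n : ℝⁿ → ℝ be continuous. Define k_QP(x) = k_n(x) + max{0, η(x)} L_g h(x) with η(x) = −(L_f h(x) + L_g h(x) k_n(x) + α(h(x)))/L_g h(x)² when L_g h(x) ≠ 0 and η(x) = 0 otherwise. Then: (i) if L_g h(x) > 0, k_QP(x) = max{k_n(x), −(L_f h(x) + α(h(x)))/L_g h(x)}; (ii) if L_g h(x) < 0, k_QP(x) = min{k_n(x), −(L_f h(x) + α(h(x)))/L_g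 h(x)}; (iii) if L_g h(x) = 0, k_QP(x) = k_n(x). -/
/-! With the threshold `r = -(L_f h + α ∘ h) / L_g h`, the multiplier is `η = (r - kₙ) / L_g h`,
so `k_QP = kₙ + max 0 ((r - kₙ) / L_g h) * L_g h`. Multiplying through by `L_g h` turns the
`max 0` into `max 0 (r - kₙ)` when `L_g h > 0` and into `min 0 (r - kₙ)` when `L_g h < 0`. -/

open RealInnerProductSpace

theorem neg_add_mul_add_div_sq {K : Type*} [Field K] {a b c : K} (hb : b ≠ 0) (k : K) :
    -(a + b * k + c) / b ^ 2 = (-(a + c) / b - k) / b := by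
  field_simp
  ring

section LinearOrderedField

variable {K : Type*} [Field K] [LinearOrder K] [IsStrictOrderedRing K]

theorem add_max_zero_div_mul_of_pos {b : K} (hb : 0 < b) (k r : K) :
    k + max 0 ((r - k) / b) * b = max k r := by
  rw [max_mul_of_nonneg _ _ hb.le, zero_mul, div_mul_cancel₀ _ hb.ne', ← max_add_add_left]
  simp

theorem add_max_zero_div_mul_of_neg {b : K} (hb : b < 0) (k r : K) :
    k + max 0 ((r - k) / b) * b = min k r := by
  rcases le_total k r with hkr | hrk
  · rw [max_eq_left (div_nonpos_of_nonneg_of_nonpos (sub_nonneg.2 hkr) hb.le), min_eq_left hkr]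
    ring
  · rw [max_eq_right (div_nonneg_of_nonpos (sub_nonpos.2 hrk) hb.le), min_eq_right hrk,
      div_mul_cancel₀ _ hb.ne]
    ring

end LinearOrderedField

open Classical

theorem kQP_single_input_switching_general {n : ℕ}
    (f : EuclideanSpace ℝ (Fin n) → EuclideanSpace ℝ (Fin n))
    (g : EuclideanSpace ℝ (Fin n) → EuclideanSpace ℝ (Fin n))
    (h : EuclideanSpace ℝ (Fin n) → ℝ) (α : ℝ → ℝ)
    (kn : EuclideanSpace ℝ (Fin n) → ℝ)
    (η : EuclideanSpace ℝ (Fin n) → ℝ)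
    (hη : ∀ x, η x = if LieF h g x = 0 then 0
      else -(LieF h f x + LieF h g x * kn x + α (h x)) / (LieF h g x) ^ 2)
    (kQP : EuclideanSpace ℝ (Fin n) → ℝ)
    (hkQP : ∀ x, kQP x = kn x + max 0 (η x) * LieF h g x) :
    ∀ x : EuclideanSpace ℝ (Fin n),
      (LieF h g x > 0 →
        kQP x = max (kn x) (-(LieF h f x + α (h x)) / LieF h g x)) ∧
      (LieF h g x < 0 →
        kQP x = min (kn x) (-(LieF h f x + α (h x)) / LieF h g x)) ∧
      (LieF h g x = 0 → kQP x = kn x) := by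
  intro x
  have hηx : LieF h g x ≠ 0 →
      η x = (-(LieF h f x + α (h x)) / LieF h g x - kn x) / LieF h g x := fun hb => by
    rw [hη x, if_neg hb, neg_add_mul_add_div_sq hb]
  refine ⟨fun hb => ?_, fun hb => ?_, fun hb => ?_⟩
  · rw [hkQP x, hηx hb.ne', add_max_zero_div_mul_of_pos hb]
  · rw [hkQP x, hηx hb.ne, add_max_zero_div_mul_of_neg hb]
  · rw [hkQP x, hb, mul_zero, add_zero]

/-- min/max switching structure of the single-input QP controller. -/
theorem kQP_single_input_switching {n : ℕ}
    (f : EuclideanSpace ℝ (Fin n) → EuclideanSpace ℝ (Fin n))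
    (g : EuclideanSpace ℝ (Fin n) → EuclideanSpace ℝ (Fin n))
    (h : EuclideanSpace ℝ (Fin n) → ℝ) (α : ℝ → ℝ)
    (hf : Continuous f) (hg : Continuous g) (hh : ContDiff ℝ 1 h) (hα : ClassKInfE α)
    (kn : EuclideanSpace ℝ (Fin n) → ℝ) (hkn : Continuous kn)
    (η : EuclideanSpace ℝ (Fin n) → ℝ)
    (hη : ∀ x, η x = if LieF h g x = 0 then 0
      else -(LieF h f x + LieF h g x * kn x + α (h x)) / (LieF h g x) ^ 2)
    (kQP : EuclideanSpace ℝ (Fin n) → ℝ)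
    (hkQP : ∀ x, kQP x = kn x + max 0 (η x) * LieF h g x) :
    ∀ x : EuclideanSpace ℝ (Fin n),
      (LieF h g x > 0 →
        kQP x = max (kn x) (-(LieF h f x + α (h x)) / LieF h g x)) ∧
      (LieF h g x < 0 →
        kQP x = min (kn x) (-(LieF h f x + α (h x)) / LieF h g x)) ∧
      (LieF h g x = 0 → kQP x = kn x) :=
  kQP_single_input_switching_general f g h α kn η hη kQP hkQP
end

section
/- Consider the inverted pendulum vector fields f(θ, θ̇) = (θ̇, (g/l) sin θ) and g-vector (0, 1/(ml²)) with parameters m, l, g > 0, the function h(θ, θ̇) = 1 − θ²/a² − θ̇²/b² − θθ̇/(ab) with a, b > 0, and α(r) = α_c r with 0 < α_c ≤ b/a. Then for every (θ₀, θ̇₀) with L_g h(θ₀, θ̇₀) = 0 (equivalently θ̇₀ = −(b/(2a)) θ₀), one has L_f h(θ₀, θ̇₀) + α_c h(θ₀, θ̇₀) = α_c + (3/(4a²))(b/a − α_c) θ₀² > 0. Consequently h satisfies the CBF condition: L_g h(x) = 0 implies L_f h(x) + α(h(x)) > 0 for all x ∈ ℝ². -/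
/-! Along `(0, c)` the derivative of `h` is a nonzero multiple of `2aθ̇ + bθ`, so `L_g h = 0` cuts out
the line `θ̇ = -(b/(2a)) θ`. On that line `∂h/∂θ̇ = 0`, so the gravity term of the drift drops out
of `L_f h`, and `L_f h + α_c h` becomes a quadratic in `θ` alone whose leading coefficient is a
positive multiple of `b/a - α_c`. -/

/-- The inverted pendulum barrier candidate `h(θ, θ̇) = 1 − θ²/a² − θ̇²/b² − θθ̇/(ab)`. -/
noncomputable def pendH (a b : ℝ) : ℝ × ℝ → ℝ :=
  fun p => 1 - p.1 ^ 2 / a ^ 2 - p.2 ^ 2 / b ^ 2 - p.1 * p.2 / (a * b)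

lemma hasFDerivAt_pendH (a b θ θd : ℝ) :
    HasFDerivAt (pendH a b)
      ((-(2 * θ / a ^ 2) - θd / (a * b)) • ContinuousLinearMap.fst ℝ ℝ ℝ
        + (-(2 * θd / b ^ 2) - θ / (a * b)) • ContinuousLinearMap.snd ℝ ℝ ℝ) (θ, θd) := by
  have hfst : HasFDerivAt Prod.fst (ContinuousLinearMap.fst ℝ ℝ ℝ) (θ, θd) := hasFDerivAt_fst
  have hsnd : HasFDerivAt Prod.snd (ContinuousLinearMap.snd ℝ ℝ ℝ) (θ, θd) := hasFDerivAt_snd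
  have hfun : pendH a b = fun p : ℝ × ℝ =>
      1 - p.1 ^ 2 * (a ^ 2)⁻¹ - p.2 ^ 2 * (b ^ 2)⁻¹ - p.1 * p.2 * (a * b)⁻¹ := by
    funext p; simp only [pendH, div_eq_mul_inv]
  rw [hfun]
  refine ((((hfst.pow 2).mul_const (a ^ 2)⁻¹).const_sub 1).sub ((hsnd.pow 2).mul_const (b ^ 2)⁻¹)
    |>.sub ((hfst.mul hsnd).mul_const (a * b)⁻¹)).congr_fderiv ?_
  ext <;> simp <;> ring

lemma fderiv_pendH_apply (a b θ θd u v : ℝ) :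
    fderiv ℝ (pendH a b) (θ, θd) (u, v)
      = (-(2 * θ / a ^ 2) - θd / (a * b)) * u + (-(2 * θd / b ^ 2) - θ / (a * b)) * v := by
  simp [(hasFDerivAt_pendH a b θ θd).fderiv]

lemma fderiv_pendH_apply_zero_eq_zero_iff {a b c : ℝ} (ha : a ≠ 0) (hb : b ≠ 0) (hc : c ≠ 0)
    (θ θd : ℝ) :
    fderiv ℝ (pendH a b) (θ, θd) (0, c) = 0 ↔ θd = -(b / (2 * a)) * θ := by
  have hform : fderiv ℝ (pendH a b) (θ, θd) (0, c) = -(c / (a * b ^ 2)) * (2 * a * θd + b * θ) := by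
    rw [fderiv_pendH_apply]
    field_simp
    ring
  rw [hform, mul_eq_zero, or_iff_right (by simp [ha, hb, hc])]
  constructor <;> intro h <;> field_simp at h ⊢ <;> linarith

lemma fderiv_pendH_add_mul_pendH_of_snd_eq {a b : ℝ} (ha : a ≠ 0) (hb : b ≠ 0) (αc θ w : ℝ) :
    fderiv ℝ (pendH a b) (θ, -(b / (2 * a)) * θ) (-(b / (2 * a)) * θ, w)
        + αc * pendH a b (θ, -(b / (2 * a)) * θ)
      = αc + 3 / (4 * a ^ 2) * (b / a - αc) * θ ^ 2 := by
  rw [fderiv_pendH_apply, pendH]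
  field_simp
  ring

theorem pendulum_cbf_condition_general (m l g a b αc : ℝ)
    (hm : 0 < m) (hl : 0 < l) (ha : 0 < a) (hb : 0 < b)
    (hαc : 0 < αc) (hαc' : αc ≤ b / a) :
    ∀ θ₀ θd₀ : ℝ,
      fderiv ℝ (pendH a b) (θ₀, θd₀) (0, 1 / (m * l ^ 2)) = 0 →
        (fderiv ℝ (pendH a b) (θ₀, θd₀) (θd₀, (g / l) * Real.sin θ₀)
            + αc * pendH a b (θ₀, θd₀)
          = αc + 3 / (4 * a ^ 2) * (b / a - αc) * θ₀ ^ 2) ∧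
        0 < fderiv ℝ (pendH a b) (θ₀, θd₀) (θd₀, (g / l) * Real.sin θ₀)
            + αc * pendH a b (θ₀, θd₀) := by
  intro θ₀ θd₀ hLg
  obtain rfl := (fderiv_pendH_apply_zero_eq_zero_iff ha.ne' hb.ne' (by positivity) θ₀ θd₀).mp hLg
  have hid := fderiv_pendH_add_mul_pendH_of_snd_eq ha.ne' hb.ne' αc θ₀ (g / l * Real.sin θ₀)
  refine ⟨hid, hid ▸ ?_⟩
  have hslack : 0 ≤ b / a - αc := sub_nonneg.mpr hαc'
  positivity

/-- on the set where `L_g h = 0`, one has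
`L_f h + α_c h = α_c + (3/(4a²))(b/a − α_c) θ₀² > 0`; hence `h` satisfies the CBF
condition for `α(r) = α_c r` with `0 < α_c ≤ b/a`. -/
theorem pendulum_cbf_condition (m l g a b αc : ℝ)
    (hm : 0 < m) (hl : 0 < l) (hg : 0 < g) (ha : 0 < a) (hb : 0 < b)
    (hαc : 0 < αc) (hαc' : αc ≤ b / a) :
    ∀ θ₀ θd₀ : ℝ,
      fderiv ℝ (pendH a b) (θ₀, θd₀) (0, 1 / (m * l ^ 2)) = 0 →
        (fderiv ℝ (pendH a b) (θ₀, θd₀) (θd₀, (g / l) * Real.sin θ₀)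
            + αc * pendH a b (θ₀, θd₀)
          = αc + 3 / (4 * a ^ 2) * (b / a - αc) * θ₀ ^ 2) ∧
        0 < fderiv ℝ (pendH a b) (θ₀, θd₀) (θd₀, (g / l) * Real.sin θ₀)
            + αc * pendH a b (θ₀, θd₀) :=
  pendulum_cbf_condition_general m l g a b αc hm hl ha hb hαc hαc'
end

section
/- Let x ∈ ℝⁿ, let h : ℝⁿ → ℝ be continuously differentiable, α an extended class K∞ function, ε : ℝ → ℝ with ε(h(x)) > 0, δ ≥ 0, and let u ∈ ℝᵐ satisfy the ISSf constraint L_f h(x) + L_g h(x) u ≥ −α(h(x)) + ‖L_g h(x)‖₂²/ε(h(x)). Then for every d ∈ ℝᵐ with ‖d‖₂ ≤ δ: L_f h(x) + L_g h(x)(u + d) ≥ −α(h(x)) + ‖L_g h(x)‖₂²/ε(h(x)) − ‖L_g h(x)‖₂ δ ≥ −α(h(x)) − ε(h(x)) δ²/4. -/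
open RealInnerProductSpace

theorem ContinuousLinearMap.neg_opNorm_mul_le_apply {E : Type*} [SeminormedAddCommGroup E]
    [NormedSpace ℝ E] (L : E →L[ℝ] ℝ) {d : E} {δ : ℝ} (hd : ‖d‖ ≤ δ) :
    -(‖L‖ * δ) ≤ L d :=
  neg_le_of_abs_le <| calc
    |L d| ≤ ‖L‖ * ‖d‖ := L.le_opNorm d
    _ ≤ ‖L‖ * δ := mul_le_mul_of_nonneg_left hd (norm_nonneg L)

theorem neg_mul_sq_div_four_le_sq_div_sub_mul {a ε : ℝ} (hε : 0 < ε) (δ : ℝ) :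
    -(ε * δ ^ 2 / 4) ≤ a ^ 2 / ε - a * δ :=
  calc -(ε * δ ^ 2 / 4)
      ≤ (a - ε * δ / 2) ^ 2 / ε - ε * δ ^ 2 / 4 := by
        have := div_nonneg (sq_nonneg (a - ε * δ / 2)) hε.le
        linarith
    _ = a ^ 2 / ε - a * δ := by field_simp; ring

theorem issf_pointwise_bound_general {n m : ℕ}
    (f : EuclideanSpace ℝ (Fin n) → EuclideanSpace ℝ (Fin n))
    (g : EuclideanSpace ℝ (Fin n) → (EuclideanSpace ℝ (Fin m) →L[ℝ] EuclideanSpace ℝ (Fin n)))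
    (h : EuclideanSpace ℝ (Fin n) → ℝ) (α : ℝ → ℝ) (ε : ℝ → ℝ)
    (x : EuclideanSpace ℝ (Fin n)) (hε : ε (h x) > 0)
    (δ : ℝ)
    (u : EuclideanSpace ℝ (Fin m))
    (hu : LieF h f x + LieG h g x u ≥ -α (h x) + ‖LieG h g x‖ ^ 2 / ε (h x)) :
    ∀ d : EuclideanSpace ℝ (Fin m), ‖d‖ ≤ δ →
      LieF h f x + LieG h g x (u + d) ≥
        -α (h x) + ‖LieG h g x‖ ^ 2 / ε (h x) - ‖LieG h g x‖ * δ ∧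
      -α (h x) + ‖LieG h g x‖ ^ 2 / ε (h x) - ‖LieG h g x‖ * δ ≥
        -α (h x) - ε (h x) * δ ^ 2 / 4 := by
  intro d hd
  have hdisturbance := (LieG h g x).neg_opNorm_mul_le_apply hd
  have hsquare := neg_mul_sq_div_four_le_sq_div_sub_mul (a := ‖LieG h g x‖) hε δ
  rw [map_add]
  constructor <;> linarith

/-- pointwise robustness bound for the ISSf constraint under a bounded
input disturbance `d` with `‖d‖ ≤ δ`. -/
theorem issf_pointwise_bound {n m : ℕ}
    (f : EuclideanSpace ℝ (Fin n) → EuclideanSpace ℝ (Fin n))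
    (g : EuclideanSpace ℝ (Fin n) → (EuclideanSpace ℝ (Fin m) →L[ℝ] EuclideanSpace ℝ (Fin n)))
    (h : EuclideanSpace ℝ (Fin n) → ℝ) (α : ℝ → ℝ) (ε : ℝ → ℝ)
    (hh : ContDiff ℝ 1 h) (hα : ClassKInfE α)
    (x : EuclideanSpace ℝ (Fin n)) (hε : ε (h x) > 0)
    (δ : ℝ) (hδ : 0 ≤ δ)
    (u : EuclideanSpace ℝ (Fin m))
    (hu : LieF h f x + LieG h g x u ≥ -α (h x) + ‖LieG h g x‖ ^ 2 / ε (h x)) :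
    ∀ d : EuclideanSpace ℝ (Fin m), ‖d‖ ≤ δ →
      LieF h f x + LieG h g x (u + d) ≥
        -α (h x) + ‖LieG h g x‖ ^ 2 / ε (h x) - ‖LieG h g x‖ * δ ∧
      -α (h x) + ‖LieG h g x‖ ^ 2 / ε (h x) - ‖LieG h g x‖ * δ ≥
        -α (h x) - ε (h x) * δ ^ 2 / 4 :=
  issf_pointwise_bound_general f g h α ε x hε δ u hu
end

section
/- Let f : ℝⁿ → ℝⁿ and g : ℝⁿ → ℝⁿˣᵐ be continuous, h : ℝⁿ → ℝ be continuously differentiable, α be a locally Lipschitz extended class K∞ function with continuously differentiable inverse α⁻¹, and ε : ℝ → ℝ_{>0} be continuously differentiable and nondecreasing. Let k : ℝⁿ → ℝᵐ be continuous with L_f h(x) + L_g h(x) k(x) ≥ −α(h(x)) + ‖L_g h(x)‖₂²/ε(h(x)) for all x. Fix δ ≥ 0, let d : [0,∞) → ℝᵐ be piecewise continuous with ‖d(t)‖₂ ≤ δ for all t, and let x : [0,∞) → ℝⁿ be differentiable with ẋ(t) = f(x(t)) + g(x(t))(k(x(t)) + d(t)). Define γ(r, δ) = −α⁻¹(−ε(r)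 δ²/4). If h(x(0)) + γ(h(x(0)), δ) ≥ 0, then h(x(t)) + γ(h(x(t)), δ) ≥ 0 for all t ≥ 0; i.e., the set C_δ = {x : h(x) + γ(h(x), δ) ≥ 0} is forward invariant for the disturbed closed-loop system. -/
/-!
Along a closed-loop trajectory, `w = h ∘ x` satisfies `ẇ ≥ φ(w)` with
`φ(r) = -ε(r) δ² / 4 - α(r)`: completing the square, the term `‖L_g h‖² / ε` of the safety
inequality absorbs the worst disturbance `-‖L_g h‖ δ`. Since `α` is strictly increasing,
`h + γ(h, δ) ≥ 0` holds exactly when `φ(h) ≤ 0`. As `φ` is continuous and antitone, a scalar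
trajectory with `ẇ ≥ φ(w)` cannot leave `{φ ≤ 0}`: after the last time `t₀` before a
hypothetical exit at which `φ(w) ≤ 0`, the derivative is positive, so `w` increases and `φ(w)`
stays below `φ(w(t₀)) ≤ 0`.
-/

open RealInnerProductSpace

open Set

theorem neg_mul_sq_div_four_le_norm_sq_div_add_apply {E : Type*} [NormedAddCommGroup E]
    [NormedSpace ℝ E] (L : E →L[ℝ] ℝ) {e δ : ℝ} (he : 0 < e) {u : E} (hu : ‖u‖ ≤ δ) :
    -(e * δ ^ 2 / 4) ≤ ‖L‖ ^ 2 / e + L u := by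
  have hLu : -(‖L‖ * δ) ≤ L u :=
    calc -(‖L‖ * δ) ≤ -‖L u‖ := neg_le_neg ((L.le_opNorm u).trans
            (mul_le_mul_of_nonneg_left hu (norm_nonneg L)))
      _ ≤ L u := neg_abs_le (L u)
  have hsq : ‖L‖ ^ 2 / e - ‖L‖ * δ + e * δ ^ 2 / 4 = (‖L‖ - e * δ / 2) ^ 2 / e := by
    field_simp
    ring
  have : 0 ≤ (‖L‖ - e * δ / 2) ^ 2 / e := by positivity
  linarith

theorem hasDerivAt_lieF_add_lieG {n m : ℕ} {h : EuclideanSpace ℝ (Fin n) → ℝ}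
    {f : EuclideanSpace ℝ (Fin n) → EuclideanSpace ℝ (Fin n)}
    {g : EuclideanSpace ℝ (Fin n) → (EuclideanSpace ℝ (Fin m) →L[ℝ] EuclideanSpace ℝ (Fin n))}
    {x : ℝ → EuclideanSpace ℝ (Fin n)} {v : EuclideanSpace ℝ (Fin m)} {t : ℝ}
    (hh : DifferentiableAt ℝ h (x t)) (hx : HasDerivAt x (f (x t) + g (x t) v) t) :
    HasDerivAt (fun s => h (x s)) (LieF h f (x t) + LieG h g (x t) v) t := by
  refine (hh.hasFDerivAt.comp_hasDerivAt t hx).congr_deriv ?_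
  simp only [LieF, LieG, ContinuousLinearMap.comp_apply, map_add]

theorem StrictMono.rightInverse_le_iff {α αinv : ℝ → ℝ} (hα : StrictMono α)
    (hαinv : Function.RightInverse αinv α) (c r : ℝ) : αinv c ≤ r ↔ c ≤ α r := by
  conv_rhs => rw [← hαinv c]
  exact hα.le_iff_le.symm

theorem ContinuousOn.exists_forall_pos_of_nonpos_of_pos {p : ℝ → ℝ} {a b : ℝ} (hab : a ≤ b)
    (hp : ContinuousOn p (Icc a b)) (ha : p a ≤ 0) (hb : 0 < p b) :
    ∃ c ∈ Ico a b, p c ≤ 0 ∧ ∀ t ∈ Ioc c b, 0 < p t := by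
  have hclosed : IsClosed (Icc a b ∩ p ⁻¹' Iic 0) :=
    hp.preimage_isClosed_of_isClosed isClosed_Icc isClosed_Iic
  obtain ⟨c, ⟨hc, hpc⟩, hmax⟩ := (isCompact_Icc.of_isClosed_subset hclosed
    inter_subset_left).exists_isGreatest ⟨a, ⟨left_mem_Icc.2 hab, ha⟩⟩
  have hcb : c ≠ b := by rintro rfl; exact (not_le.2 hb) hpc
  refine ⟨c, ⟨hc.1, lt_of_le_of_ne hc.2 hcb⟩, hpc, fun t ht => ?_⟩
  by_contra! hpt
  exact (not_le.2 ht.1) (hmax ⟨⟨hc.1.trans ht.1.le, ht.2⟩, hpt⟩)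

theorem Antitone.comp_nonpos_of_le_hasDerivAt {φ w w' : ℝ → ℝ} (hφ : Antitone φ)
    (hφc : Continuous φ) (hw : ∀ t ≥ 0, HasDerivAt w (w' t) t)
    (hw' : ∀ t ≥ 0, φ (w t) ≤ w' t) (h0 : φ (w 0) ≤ 0) : ∀ t ≥ 0, φ (w t) ≤ 0 := by
  intro t₁ ht₁
  by_contra! hpos
  have hcont : ContinuousOn (fun t => φ (w t)) (Icc 0 t₁) := fun t ht =>
    (hφc.continuousAt.comp (hw t ht.1).continuousAt).continuousWithinAt
  obtain ⟨t₀, ht₀, hφt₀, hafter⟩ := hcont.exists_forall_pos_of_nonpos_of_pos ht₁ h0 hpos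
  have hmono : MonotoneOn w (Icc t₀ t₁) := by
    refine monotoneOn_of_hasDerivWithinAt_nonneg (convex_Icc t₀ t₁)
      (fun t ht => (hw t (ht₀.1.trans ht.1)).continuousAt.continuousWithinAt)
      (fun t ht => ?_) (fun t ht => ?_) (f' := w')
    all_goals rw [interior_Icc] at ht
    · exact (hw t (ht₀.1.trans ht.1.le)).hasDerivWithinAt
    · exact (hafter t ⟨ht.1, ht.2.le⟩).le.trans (hw' t (ht₀.1.trans ht.1.le))
  have hle : w t₀ ≤ w t₁ := hmono (left_mem_Icc.2 ht₀.2.le) (right_mem_Icc.2 ht₀.2.le) ht₀.2.le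
  exact (not_le.2 hpos) ((hφ hle).trans hφt₀)

theorem issf_forward_invariance_general {n m : ℕ}
    (f : EuclideanSpace ℝ (Fin n) → EuclideanSpace ℝ (Fin n))
    (g : EuclideanSpace ℝ (Fin n) → (EuclideanSpace ℝ (Fin m) →L[ℝ] EuclideanSpace ℝ (Fin n)))
    (h : EuclideanSpace ℝ (Fin n) → ℝ) (α αinv ε : ℝ → ℝ)
    (hh : ContDiff ℝ 1 h)
    (hα : ClassKInfE α)
    (hαinv₂ : Function.RightInverse αinv α)
    (hεpos : ∀ r : ℝ, 0 < ε r) (hεC1 : ContDiff ℝ 1 ε) (hεmono : Monotone ε)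
    (k : EuclideanSpace ℝ (Fin n) → EuclideanSpace ℝ (Fin m))
    (hsafe : ∀ x : EuclideanSpace ℝ (Fin n),
      LieF h f x + LieG h g x (k x) ≥ -α (h x) + ‖LieG h g x‖ ^ 2 / ε (h x))
    (δ : ℝ)
    (d : ℝ → EuclideanSpace ℝ (Fin m))
    (hd_bdd : ∀ t : ℝ, ‖d t‖ ≤ δ)
    (x : ℝ → EuclideanSpace ℝ (Fin n))
    (hode : ∀ t : ℝ, t ≥ 0 → HasDerivAt x (f (x t) + g (x t) (k (x t) + d t)) t)
    (h0 : h (x 0) + -αinv (-(ε (h (x 0)) * δ ^ 2 / 4)) ≥ 0) :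
    ∀ t : ℝ, t ≥ 0 → h (x t) + -αinv (-(ε (h (x t)) * δ ^ 2 / 4)) ≥ 0 := by
  set φ : ℝ → ℝ := fun r => -(ε r * δ ^ 2 / 4) - α r
  have hφ : Antitone φ := fun a b hab =>
    sub_le_sub (neg_le_neg (by gcongr; exact hεmono hab)) (hα.strictMono.monotone hab)
  have hφc : Continuous φ :=
    ((hεC1.continuous.mul continuous_const).div_const 4).neg.sub hα.continuous
  have hmem_iff (y : EuclideanSpace ℝ (Fin n)) :
      h y + -αinv (-(ε (h y) * δ ^ 2 / 4)) ≥ 0 ↔ φ (h y) ≤ 0 := by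
    rw [ge_iff_le, ← sub_eq_add_neg, sub_nonneg, hα.strictMono.rightInverse_le_iff hαinv₂,
      ← sub_nonpos]
  have hφ_le_deriv : ∀ t ≥ 0, φ (h (x t)) ≤ LieF h f (x t) + LieG h g (x t) (k (x t) + d t) := by
    intro t _
    have hyoung := neg_mul_sq_div_four_le_norm_sq_div_add_apply (LieG h g (x t)) (hεpos (h (x t)))
      (hd_bdd t)
    simp only [φ, map_add]
    linarith [hsafe (x t)]
  intro t ht
  rw [hmem_iff] at h0 ⊢
  exact hφ.comp_nonpos_of_le_hasDerivAt hφc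
    (fun s hs => hasDerivAt_lieF_add_lieG (hh.differentiable one_ne_zero _) (hode s hs))
    hφ_le_deriv h0 t ht

/-- ISSf forward invariance — if the controller satisfies the ISSf-CBF
inequality, then the inflated set `C_δ = {x : h(x) + γ(h(x), δ) ≥ 0}` with
`γ(r, δ) = −α⁻¹(−ε(r) δ²/4)` is forward invariant for the disturbed closed loop. -/
theorem issf_forward_invariance {n m : ℕ}
    (f : EuclideanSpace ℝ (Fin n) → EuclideanSpace ℝ (Fin n))
    (g : EuclideanSpace ℝ (Fin n) → (EuclideanSpace ℝ (Fin m) →L[ℝ] EuclideanSpace ℝ (Fin n)))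
    (h : EuclideanSpace ℝ (Fin n) → ℝ) (α αinv ε : ℝ → ℝ)
    (hf : Continuous f) (hg : Continuous g) (hh : ContDiff ℝ 1 h)
    (hα : ClassKInfE α) (hαlip : LocallyLipschitz α)
    (hαinv₁ : Function.LeftInverse αinv α) (hαinv₂ : Function.RightInverse αinv α)
    (hαinvC1 : ContDiff ℝ 1 αinv)
    (hεpos : ∀ r : ℝ, 0 < ε r) (hεC1 : ContDiff ℝ 1 ε) (hεmono : Monotone ε)
    (k : EuclideanSpace ℝ (Fin n) → EuclideanSpace ℝ (Fin m)) (hk : Continuous k)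
    (hsafe : ∀ x : EuclideanSpace ℝ (Fin n),
      LieF h f x + LieG h g x (k x) ≥ -α (h x) + ‖LieG h g x‖ ^ 2 / ε (h x))
    (δ : ℝ) (hδ : 0 ≤ δ)
    (d : ℝ → EuclideanSpace ℝ (Fin m))
    (hd_pc : ∃ T : Set ℝ, T.Countable ∧ ∀ t ∉ T, ContinuousAt d t)
    (hd_bdd : ∀ t : ℝ, ‖d t‖ ≤ δ)
    (x : ℝ → EuclideanSpace ℝ (Fin n))
    (hode : ∀ t : ℝ, t ≥ 0 → HasDerivAt x (f (x t) + g (x t) (k (x t) + d t)) t)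
    (h0 : h (x 0) + -αinv (-(ε (h (x 0)) * δ ^ 2 / 4)) ≥ 0) :
    ∀ t : ℝ, t ≥ 0 → h (x t) + -αinv (-(ε (h (x t)) * δ ^ 2 / 4)) ≥ 0 :=
  issf_forward_invariance_general f g h α αinv ε hh hα hαinv₂ hεpos hεC1 hεmono k hsafe δ d hd_bdd x
    hode h0
end

section
/- Let α : ℝ → ℝ be an extended class K∞ function and ε : ℝ → ℝ_{>0} be continuous and nondecreasing. For δ ≥ 0, define F_δ(r) = r − α⁻¹(−ε(r) δ²/4). Then for each δ ≥ 0 the equation F_δ(h*) = 0 has a unique solution h*(δ) ≤ 0, and the map δ ↦ h*(δ) is nonincreasing: if 0 ≤ δ₁ ≤ δ₂ then h*(δ₂) ≤ h*(δ₁). That is, the invariant set C_δ grows as the disturbance bound δ increases. -/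
/-!
Write `g = α⁻¹` and `c = δ²/4`. Since `g` and `ε` are nondecreasing and `c ≥ 0`, the term
`g(-ε(r) c)` is nonincreasing in `r`, hence `F_δ(r) = r - g(-ε(r) c)` is strictly increasing and
has at most one zero. It is continuous, nonnegative at `0` and nonpositive at `g(-ε(0) c) ≤ 0`, so
the intermediate value theorem gives a zero, and every zero satisfies `r = g(-ε(r) c) ≤ g 0 = 0`.
Finally `F_δ(r)` is nondecreasing in `δ`, so `F_{δ₂}(h*(δ₁)) ≥ 0`, which by strict monotonicity
of `F_{δ₂}` puts its zero `h*(δ₂)` below `h*(δ₁)`.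
-/

/-- The paper's `F_δ`. -/
def levelMap (g ε : ℝ → ℝ) (c r : ℝ) : ℝ := r - g (-(ε r * c))

section levelMap

variable {g ε : ℝ → ℝ} {c : ℝ}

theorem levelMap_strictMono (hg : Monotone g) (hε : Monotone ε) (hc : 0 ≤ c) :
    StrictMono (levelMap g ε c) := by
  intro a b hab
  have : g (-(ε b * c)) ≤ g (-(ε a * c)) :=
    hg (neg_le_neg (mul_le_mul_of_nonneg_right (hε hab.le) hc))
  simp only [levelMap]
  linarith

theorem levelMap_le_levelMap_of_le {c₁ c₂ r : ℝ} (hg : Monotone g) (hεr : 0 ≤ ε r)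
    (hc : c₁ ≤ c₂) : levelMap g ε c₁ r ≤ levelMap g ε c₂ r :=
  sub_le_sub_left (hg (neg_le_neg (mul_le_mul_of_nonneg_left hc hεr))) r

theorem nonpos_of_levelMap_eq_zero {r : ℝ} (hg : Monotone g) (hg0 : g 0 = 0)
    (hεr : 0 ≤ ε r) (hc : 0 ≤ c) (h : levelMap g ε c r = 0) : r ≤ 0 := by
  rw [levelMap, sub_eq_zero] at h
  rw [h, ← hg0]
  exact hg (neg_nonpos.mpr (mul_nonneg hεr hc))

theorem exists_levelMap_eq_zero (hg : Monotone g) (hgc : Continuous g) (hg0 : g 0 = 0)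
    (hε : Monotone ε) (hεc : Continuous ε) (hε0 : 0 ≤ ε 0) (hc : 0 ≤ c) :
    ∃ r, levelMap g ε c r = 0 := by
  have hg_nonpos : g (-(ε 0 * c)) ≤ 0 :=
    (hg (neg_nonpos.mpr (mul_nonneg hε0 hc))).trans_eq hg0
  have hF_left : levelMap g ε c (g (-(ε 0 * c))) ≤ 0 :=
    sub_nonpos.mpr (hg (neg_le_neg (mul_le_mul_of_nonneg_right (hε hg_nonpos) hc)))
  have hF_right : 0 ≤ levelMap g ε c 0 := by
    rwa [levelMap, zero_sub, neg_nonneg]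
  have hcont : Continuous (levelMap g ε c) :=
    continuous_id.sub (hgc.comp (hεc.mul continuous_const).neg)
  obtain ⟨r, -, hr⟩ := intermediate_value_Icc hg_nonpos hcont.continuousOn ⟨hF_left, hF_right⟩
  exact ⟨r, hr⟩

theorem le_of_levelMap_eq_zero_of_le {c₁ c₂ r₁ r₂ : ℝ} (hg : Monotone g) (hε : Monotone ε)
    (hεr₁ : 0 ≤ ε r₁) (hc₁ : 0 ≤ c₁) (hc : c₁ ≤ c₂)
    (h₁ : levelMap g ε c₁ r₁ = 0) (h₂ : levelMap g ε c₂ r₂ = 0) : r₂ ≤ r₁ :=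
  (levelMap_strictMono hg hε (hc₁.trans hc)).le_iff_le.mp <| by
    rw [h₂, ← h₁]
    exact levelMap_le_levelMap_of_le hg hεr₁ hc

end levelMap

theorem hstar_unique_and_monotone_general (α αinv : ℝ → ℝ) (hα : ClassKInfE α)
    (hαinv₂ : Function.RightInverse αinv α)
    (ε : ℝ → ℝ) (hεpos : ∀ r : ℝ, 0 < ε r)
    (hεcont : Continuous ε) (hεmono : Monotone ε) :
    (∀ δ : ℝ, 0 ≤ δ → ∃! r : ℝ, r - αinv (-(ε r * δ ^ 2 / 4)) = 0) ∧
    (∀ δ : ℝ, 0 ≤ δ → ∀ r : ℝ, r - αinv (-(ε r * δ ^ 2 / 4)) = 0 → r ≤ 0) ∧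
    (∀ δ₁ δ₂ r₁ r₂ : ℝ, 0 ≤ δ₁ → δ₁ ≤ δ₂ →
      r₁ - αinv (-(ε r₁ * δ₁ ^ 2 / 4)) = 0 →
      r₂ - αinv (-(ε r₂ * δ₂ ^ 2 / 4)) = 0 → r₂ ≤ r₁) := by
  let e := hα.strictMono.orderIsoOfRightInverse α αinv hαinv₂
  have hmono : Monotone αinv := e.symm.monotone
  have hcont : Continuous αinv := e.symm.continuous
  have hzero : αinv 0 = 0 := hα.strictMono.injective (by rw [hαinv₂ 0, hα.map_zero])
  have hε r : 0 ≤ ε r := (hεpos r).le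
  have hc (δ : ℝ) : 0 ≤ δ ^ 2 / 4 := by positivity
  simp only [mul_div_assoc]
  refine ⟨fun δ hδ => ?_, fun δ _ r hr => ?_, fun δ₁ δ₂ r₁ r₂ hδ₁ hδ h₁ h₂ => ?_⟩
  · obtain ⟨r, hr⟩ := exists_levelMap_eq_zero hmono hcont hzero hεmono hεcont (hε 0) (hc δ)
    exact ⟨r, hr, fun s hs =>
      (levelMap_strictMono hmono hεmono (hc δ)).injective (hs.trans hr.symm)⟩
  · exact nonpos_of_levelMap_eq_zero hmono hzero (hε r) (hc δ) hr
  · exact le_of_levelMap_eq_zero_of_le hmono hεmono (hε r₁) (hc δ₁) (by gcongr) h₁ h₂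

/-- for each `δ ≥ 0`, `F_δ(r) = r − α⁻¹(−ε(r) δ²/4)` has a unique zero
`h*(δ)`, this zero is `≤ 0`, and `δ ↦ h*(δ)` is nonincreasing. -/
theorem hstar_unique_and_monotone (α αinv : ℝ → ℝ) (hα : ClassKInfE α)
    (hαinv₁ : Function.LeftInverse αinv α) (hαinv₂ : Function.RightInverse αinv α)
    (ε : ℝ → ℝ) (hεpos : ∀ r : ℝ, 0 < ε r)
    (hεcont : Continuous ε) (hεmono : Monotone ε) :
    (∀ δ : ℝ, 0 ≤ δ → ∃! r : ℝ, r - αinv (-(ε r * δ ^ 2 / 4)) = 0) ∧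
    (∀ δ : ℝ, 0 ≤ δ → ∀ r : ℝ, r - αinv (-(ε r * δ ^ 2 / 4)) = 0 → r ≤ 0) ∧
    (∀ δ₁ δ₂ r₁ r₂ : ℝ, 0 ≤ δ₁ → δ₁ ≤ δ₂ →
      r₁ - αinv (-(ε r₁ * δ₁ ^ 2 / 4)) = 0 →
      r₂ - αinv (-(ε r₂ * δ₂ ^ 2 / 4)) = 0 → r₂ ≤ r₁) :=
  hstar_unique_and_monotone_general α αinv hα hαinv₂ ε hεpos hεcont hεmono
end
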